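/- arXiv:2508.18487 — 3 statements merged into one kernel-verified Lean document; each statement's English description precedes it below -/
import Mathlib

section
/- If G is a simple graph containing at least one edge and having chromatic number at most 3, then ψ_{d,min}(G) = 2; in particular, G admits an orientation that contains no alternating odd cycle. -/
universe u

/-- An orientation of a simple graph: each edge receives exactly one of its two directions. -/
structure GraphOrientation {V : Type u} (G : SimpleGraph V) where
  dir : V → V → Prop
  adj_iff : ∀ u v, G.Adj u v ↔ (dir u v ∨ dir v u)
  asymm : ∀ u v, dir u v → ¬ dir v u

/-- The closed out-neighborhood of a vertex in an orientation. -/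
def GraphOrientation.closedOutNbhd {V : Type u} {G : SimpleGraph V}
    (D : GraphOrientation G) (v : V) : Set V :=
  insert v {u | D.dir v u}

/-- The directed local chromatic number of an oriented graph: the least `n` such that some
proper coloring of the underlying graph puts at most `n` colors on every closed
out-neighborhood. -/
noncomputable def psiD {V : Type u} {G : SimpleGraph V} (D : GraphOrientation G) : ℕ∞ :=
  sInf {n : ℕ∞ | ∃ c : V → ℕ, (∀ u w, G.Adj u w → c u ≠ c w) ∧
    ∀ v, (c '' D.closedOutNbhd v).encard ≤ n}

/-- `ψ_{d,min}`: the minimum of `ψ_d` over all orientations of `G`. -/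
noncomputable def psiDMin {V : Type u} (G : SimpleGraph V) : ℕ∞ :=
  ⨅ D : GraphOrientation G, psiD D

/-- `f : ZMod n → V` describes a cycle of length `n` in `G`. -/
def SimpleGraph.IsCycleMap {V : Type u} (G : SimpleGraph V) {n : ℕ} (f : ZMod n → V) : Prop :=
  Function.Injective f ∧ ∀ i, G.Adj (f i) (f (i + 1))

/-- The cycle described by `f` is alternating with respect to the direction relation `D`:
exactly one of its vertices is neither a source nor a sink of the cycle. -/
def IsAltCycle {V : Type u} (D : V → V → Prop) {n : ℕ} (f : ZMod n → V) : Prop :=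
  ∃! i : ZMod n,
    ¬ ((D (f i) (f (i - 1)) ∧ D (f i) (f (i + 1))) ∨
       (D (f (i - 1)) (f i) ∧ D (f (i + 1)) (f i)))

/-- The orientation `D` of `G` contains an alternating odd cycle. -/
def HasAltOddCycle {V : Type u} {G : SimpleGraph V} (D : GraphOrientation G) : Prop :=
  ∃ (n : ℕ) (f : ZMod n → V), Odd n ∧ G.IsCycleMap f ∧ IsAltCycle D.dir f

/-- The odd girth of `G`: the length of a shortest odd cycle. -/
noncomputable def oddGirth {V : Type u} (G : SimpleGraph V) : ℕ :=
  sInf {n | Odd n ∧ ∃ f : ZMod n → V, G.IsCycleMap f}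

/-- The symmetric shift graph `S_m`. -/
def shiftGraph (m : ℕ) : SimpleGraph {p : Fin m × Fin m // p.1 ≠ p.2} where
  Adj x y := x.1.2 = y.1.1 ∨ x.1.1 = y.1.2
  symm := ⟨fun _ _ h => h.elim (fun h => Or.inr h.symm) (fun h => Or.inl h.symm)⟩
  loopless := ⟨fun x h => h.elim (fun h => x.2 h.symm) (fun h => x.2 h)⟩

/-- The Kneser graph `KG(n,k)`. -/
def kneserGraph (n k : ℕ) : SimpleGraph {A : Finset (Fin n) // A.card = k} where
  Adj A B := Disjoint A.1 B.1 ∧ A ≠ B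
  symm := ⟨fun _ _ h => ⟨h.1.symm, h.2.symm⟩⟩
  loopless := ⟨fun _ h => h.2 rfl⟩

/-- A subset of `Fin n` (thought of as `[n]` arranged cyclically) is stable if it contains
no two cyclically consecutive elements. -/
def IsStableSet {n : ℕ} (A : Finset (Fin n)) : Prop :=
  ∀ i ∈ A, ∀ j ∈ A, (i.val + 1) % n ≠ j.val

/-- The Schrijver graph `SG(n,k)`. -/
def schrijverGraph (n k : ℕ) :
    SimpleGraph {A : Finset (Fin n) // A.card = k ∧ IsStableSet A} where
  Adj A B := Disjoint A.1 B.1 ∧ A ≠ B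
  symm := ⟨fun _ _ h => ⟨h.1.symm, h.2.symm⟩⟩
  loopless := ⟨fun _ h => h.2 rfl⟩

/-- The `r`-level generalized Mycielskian `M_r(G)`; `none` is the apex vertex `z`. -/
def genMycielskian {V : Type u} (G : SimpleGraph V) (r : ℕ) :
    SimpleGraph (Option (V × Fin r)) where
  Adj x y :=
    match x, y with
    | some (u, i), some (v, j) =>
        G.Adj u v ∧ (i.val + 1 = j.val ∨ j.val + 1 = i.val ∨ (i.val = 0 ∧ j.val = 0))
    | some (_, i), none => i.val = r - 1
    | none, some (_, j) => j.val = r - 1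
    | none, none => False
  symm := by
    refine ⟨?_⟩
    rintro (_ | ⟨u, i⟩) (_ | ⟨v, j⟩) h
    · exact h
    · exact h
    · exact h
    · exact ⟨h.1.symm, by tauto⟩
  loopless := by
    refine ⟨?_⟩
    rintro (_ | ⟨u, i⟩) h
    · exact h
    · exact G.loopless.irrefl u h.1

/-
The colour classes `C⁻¹{0}, C⁻¹{1}, C⁻¹{2}` of a proper 3-colouring `C` give the orientation
`u → v` iff `C v = C u + 1` in `ZMod 3`. Every out-neighbour of `v` has colour `C v + 1`, so
this orientation has `ψ_d ≤ 2`, and an edge forces `ψ_d ≥ 2` in any orientation.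
If a vertex of an oriented cycle is a source or a sink, its two cycle neighbours carry the same
colour. Walking two steps at a time from the exceptional vertex of an alternating odd cycle
then gives its predecessor the exceptional vertex's own colour, although the two are adjacent.
-/

lemma ZMod.apply_sub_one_eq_of_odd {α : Type*} {n : ℕ} (hn : Odd n) (g : ZMod n → α)
    (i₀ : ZMod n) (h : ∀ i, i ≠ i₀ → g (i + 1) = g (i - 1)) : g (i₀ - 1) = g i₀ := by
  have even_steps : ∀ k : ℕ, 2 * k < n → g (i₀ + (2 * k : ℕ)) = g i₀ := by
    intro k
    induction k with
    | zero => simp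
    | succ k ih =>
      intro hk
      have hne : i₀ + ((2 * k + 1 : ℕ) : ZMod n) ≠ i₀ := by
        rw [Ne, add_eq_left, ZMod.natCast_eq_zero_iff]
        exact fun hdvd => (Nat.le_of_dvd (Nat.succ_pos _) hdvd).not_gt (by omega)
      have := h _ hne
      push_cast at this ih ⊢
      rw [← ih (by omega)]
      convert this using 2 <;> ring
  obtain ⟨m, rfl⟩ := hn
  rw [← even_steps m (by omega)]
  congr 1
  have : ((2 * m + 1 : ℕ) : ZMod (2 * m + 1)) = 0 := ZMod.natCast_self _
  push_cast at this ⊢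
  linear_combination -this

lemma ZMod.eq_add_one_or_eq_add_one_of_ne :
    ∀ x y : ZMod 3, x ≠ y → y = x + 1 ∨ x = y + 1 := by decide

namespace SimpleGraph.Coloring

variable {V : Type u} {G : SimpleGraph V}

def cyclicOrientation (C : G.Coloring (ZMod 3)) : GraphOrientation G where
  dir u v := G.Adj u v ∧ C v = C u + 1
  adj_iff u v := by
    refine ⟨fun h => ?_, fun h => h.elim And.left fun h' => h'.1.symm⟩
    rcases ZMod.eq_add_one_or_eq_add_one_of_ne _ _ (C.valid h) with h' | h'
    exacts [Or.inl ⟨h, h'⟩, Or.inr ⟨h.symm, h'⟩]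
  asymm u v := by
    rintro ⟨_, huv⟩ ⟨_, hvu⟩
    rw [huv, add_assoc] at hvu
    exact absurd (add_eq_left.mp hvu.symm) (by decide)

lemma psiD_cyclicOrientation_le_two (C : G.Coloring (ZMod 3)) :
    psiD C.cyclicOrientation ≤ 2 := by
  refine sInf_le ⟨fun v => (C v).val, fun u w h hval => C.valid h (ZMod.val_injective 3 hval),
    fun v => ?_⟩
  have hsub : (fun u => (C u).val) '' C.cyclicOrientation.closedOutNbhd v ⊆
      {(C v).val, (C v + 1).val} := by
    rintro _ ⟨u, rfl | ⟨_, hu⟩, rfl⟩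
    exacts [Or.inl rfl, Or.inr (congrArg ZMod.val hu)]
  calc _ ≤ ({(C v).val, (C v + 1).val} : Set ℕ).encard := Set.encard_mono hsub
    _ ≤ ({(C v + 1).val} : Set ℕ).encard + 1 := Set.encard_insert_le _ _
    _ = 2 := by rw [Set.encard_singleton]; rfl

lemma cyclicOrientation_not_hasAltOddCycle (C : G.Coloring (ZMod 3)) :
    ¬ HasAltOddCycle C.cyclicOrientation := by
  rintro ⟨n, f, hodd, ⟨-, hadj⟩, i₀, -, huniq⟩
  have same_nbr_colors : ∀ i, i ≠ i₀ → C (f (i + 1)) = C (f (i - 1)) := by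
    intro i hi
    rcases not_not.mp (mt (huniq i) hi) with ⟨⟨_, h₁⟩, _, h₂⟩ | ⟨⟨_, h₁⟩, _, h₂⟩
    · rw [h₁, h₂]
    · exact add_right_cancel (h₂.symm.trans h₁)
  refine C.valid (hadj (i₀ - 1)) ?_
  rw [sub_add_cancel]
  exact ZMod.apply_sub_one_eq_of_odd hodd (C ∘ f) i₀ same_nbr_colors

end SimpleGraph.Coloring

lemma GraphOrientation.two_le_psiD {V : Type u} {G : SimpleGraph V} (D : GraphOrientation G)
    (hedge : ∃ u v, G.Adj u v) : 2 ≤ psiD D := by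
  obtain ⟨u, v, huv⟩ := hedge
  obtain ⟨a, b, hab⟩ : ∃ a b, D.dir a b :=
    ((D.adj_iff u v).mp huv).elim (fun h => ⟨u, v, h⟩) (fun h => ⟨v, u, h⟩)
  refine le_sInf ?_
  rintro m ⟨c, hc, hm⟩
  calc (2 : ℕ∞) = ({c a, c b} : Set ℕ).encard :=
        (Set.encard_pair (hc a b ((D.adj_iff a b).mpr (Or.inl hab)))).symm
    _ ≤ (c '' D.closedOutNbhd a).encard := by
        rw [← Set.image_pair]
        exact Set.encard_mono (Set.image_mono (Set.insert_subset_insert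
          (Set.singleton_subset_iff.mpr hab)))
    _ ≤ m := hm a

theorem statement1 {V : Type u} (G : SimpleGraph V)
    (hedge : ∃ u v, G.Adj u v) (hchrom : G.chromaticNumber ≤ 3) :
    psiDMin G = 2 ∧ ∃ D : GraphOrientation G, ¬ HasAltOddCycle D := by
  have hcol : G.Colorable 3 := SimpleGraph.chromaticNumber_le_iff_colorable.mp hchrom
  let C : G.Coloring (ZMod 3) := hcol.toColoring (by simp)
  refine ⟨le_antisymm ?_ (le_iInf fun D => D.two_le_psiD hedge),
    C.cyclicOrientation, C.cyclicOrientation_not_hasAltOddCycle⟩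
  exact iInf_le_of_le _ C.psiD_cyclicOrientation_le_two
end

section
/- There exists a graph homomorphism from the Grötzsch graph M₂(C₅) (the Mycielskian of the 5-cycle) to the symmetric shift graph S_4. -/
universe u

/-- The cycle `C₅`. -/
def cycle5 : SimpleGraph (ZMod 5) where
  Adj x y := y = x + 1 ∨ x = y + 1
  symm := ⟨fun _ _ h => h.symm⟩
  loopless := by
    refine ⟨?_⟩
    intro x h
    rcases h with h | h <;> exact (by decide : (1 : ZMod 5) ≠ 0) (left_eq_add.mp h)

/-- The top level of `M₂(G)` is independent, so `g` is constrained only through `hfg` and `hz`. -/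
def genMycielskianTwoHom {V W : Type*} {G : SimpleGraph V} {H : SimpleGraph W}
    (f : G →g H) (g : V → W) (z : W)
    (hfg : ∀ u v, G.Adj u v → H.Adj (f u) (g v)) (hz : ∀ v, H.Adj z (g v)) :
    genMycielskian G 2 →g H where
  toFun
    | none => z
    | some (v, 0) => f v
    | some (v, 1) => g v
  map_rel' := by
    rintro (_ | ⟨u, i⟩) (_ | ⟨v, j⟩) h
    all_goals (try fin_cases i) <;> (try fin_cases j) <;>
      simp_all [genMycielskian, H.adj_comm _ z, H.adj_comm (g _), f.map_adj,
        fun u v (h : G.Adj v u) => hfg u v h.symm]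

instance : DecidableRel cycle5.Adj := fun _ _ => inferInstanceAs (Decidable (_ ∨ _))

instance : DecidableRel (shiftGraph 4).Adj := fun _ _ => inferInstanceAs (Decidable (_ ∨ _))

def grotzschBottomLevel : ZMod 5 → {p : Fin 4 × Fin 4 // p.1 ≠ p.2} :=
  ![⟨(0, 1), by decide⟩, ⟨(1, 0), by decide⟩, ⟨(0, 2), by decide⟩,
    ⟨(2, 1), by decide⟩, ⟨(1, 3), by decide⟩]

-- The apex goes to `(2, 3)`, whose neighbours are the pairs `(3, _)` and `(_, 2)`.
def grotzschTopLevel : ZMod 5 → {p : Fin 4 × Fin 4 // p.1 ≠ p.2} :=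
  ![⟨(3, 1), by decide⟩, ⟨(3, 0), by decide⟩, ⟨(0, 2), by decide⟩,
    ⟨(3, 0), by decide⟩, ⟨(1, 2), by decide⟩]

theorem statement11 : Nonempty (genMycielskian cycle5 2 →g shiftGraph 4) :=
  ⟨genMycielskianTwoHom ⟨grotzschBottomLevel, by decide⟩ grotzschTopLevel ⟨(2, 3), by decide⟩
    (by decide) (by decide)⟩
end

section
/- For integers p ≥ 2q ≥ 2, the rational complete graph K_{p/q} admits an orientation that contains no alternating odd cycle if and only if p ≤ 3q. -/
universe u

/-- The rational complete graph `K_{p/q}`. -/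
def ratComplete (p q : ℕ) : SimpleGraph (Fin p) where
  Adj a b := (q : ℤ) ≤ |((a : ℕ) : ℤ) - ((b : ℕ) : ℤ)| ∧
    |((a : ℕ) : ℤ) - ((b : ℕ) : ℤ)| ≤ (p : ℤ) - (q : ℤ) ∧ a ≠ b
  symm := by
    refine ⟨?_⟩
    intro a b h
    refine ⟨?_, ?_, h.2.2.symm⟩ <;> rw [abs_sub_comm]
    · exact h.1
    · exact h.2.1
  loopless := ⟨fun a h => h.2.2 rfl⟩

/-!
If `p ≤ 3q`, colour the vertex `v` of `K_{p/q}` by `⌊v/q⌋ ∈ ℤ/3` and orient every edge from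
colour `c` to colour `c + 1`. Along a cycle `f`, the quantity `C(f(i+1)) - C(f(i-1))` vanishes at
sources and sinks and is `±2` at every other vertex, while its sum over the cycle is zero; so no
cycle has exactly one vertex that is neither a source nor a sink.

If `p > 3q`, an orientation without alternating odd cycles has no transitive triangle. The
triangles `{a, a+q, a+2q}`, `{a, a+q, a+2q+1}` and `{a, a+q+1, a+2q+1}` (mod `p`) then force all
arcs between `a` and `a+q`, and between `a` and `a+q+1`, to point the same way, and the cycle
`q, 2q, q-1, 2q-1, …, 1, q+1, 0` of length `2q+1` is alternating, with `q` as its only vertex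
that is neither a source nor a sink.
-/

namespace GraphOrientation

variable {V : Type u} {G : SimpleGraph V} (D : GraphOrientation G)

theorem adj_of_dir {u v : V} (h : D.dir u v) : G.Adj u v :=
  (D.adj_iff u v).2 (Or.inl h)

theorem dir_swap_iff {u v : V} (h : G.Adj u v) : D.dir v u ↔ ¬ D.dir u v :=
  ⟨fun hvu huv => D.asymm _ _ huv hvu, ((D.adj_iff u v).1 h).resolve_left⟩

def reverse : GraphOrientation G where
  dir u v := D.dir v u
  adj_iff u v := (D.adj_iff u v).trans or_comm
  asymm u v := D.asymm v u

theorem hasAltOddCycle_of_reverse (h : HasAltOddCycle D.reverse) : HasAltOddCycle D := by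
  obtain ⟨n, f, hn, hf, i, hi, huniq⟩ := h
  exact ⟨n, f, hn, hf, i, fun h => hi h.symm, fun j hj => huniq j fun h => hj h.symm⟩

theorem hasAltOddCycle_of_transitive {s m t : V} (hsm : D.dir s m) (hmt : D.dir m t)
    (hst : D.dir s t) : HasAltOddCycle D := by
  refine ⟨3, ![m, t, s], by decide, ⟨?_, ?_⟩, 0, ?_, ?_⟩
  · have := (D.adj_of_dir hmt).ne
    have := (D.adj_of_dir hst).ne
    have := (D.adj_of_dir hsm).ne
    intro i j hij
    fin_cases i <;> fin_cases j <;> first | rfl | simp_all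
  · intro i
    fin_cases i
    · exact D.adj_of_dir hmt
    · exact (D.adj_of_dir hst).symm
    · exact D.adj_of_dir hsm
  · rintro (⟨h, -⟩ | ⟨-, h⟩)
    · exact D.asymm _ _ hsm h
    · exact D.asymm _ _ hmt h
  · intro j hj
    fin_cases j
    · rfl
    · exact absurd (Or.inr ⟨hmt, hst⟩) hj
    · exact absurd (Or.inl ⟨hst, hsm⟩) hj

theorem dir_iff_dir_of_triangle (hno : ¬ HasAltOddCycle D) {a b c : V} (hab : G.Adj a b)
    (hbc : G.Adj b c) (hca : G.Adj c a) : D.dir a b ↔ D.dir b c := by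
  have cyclic {s m t : V} (hts : G.Adj t s) (hsm : D.dir s m) (hmt : D.dir m t) : D.dir t s :=
    (D.dir_swap_iff hts.symm).2 fun hst => hno (D.hasAltOddCycle_of_transitive hsm hmt hst)
  constructor
  · intro h
    by_contra h'
    rcases (D.adj_iff c a).1 hca with hca' | hac
    · exact h' (cyclic hbc hca' h)
    · exact D.asymm _ _ h (cyclic hab.symm hac ((D.dir_swap_iff hbc).2 h'))
  · intro h
    by_contra h'
    rcases (D.adj_iff c a).1 hca with hca' | hac
    · exact h' (cyclic hab h hca')
    · exact D.asymm _ _ h (cyclic hbc.symm ((D.dir_swap_iff hab).2 h') hac)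

def ofColoring (C : G.Coloring (ZMod 3)) : GraphOrientation G where
  dir u v := G.Adj u v ∧ C v = C u + 1
  adj_iff u v := by
    have key : ∀ a b : ZMod 3, a ≠ b → b = a + 1 ∨ a = b + 1 := by decide
    refine ⟨fun h => (key _ _ (C.valid h)).imp (⟨h, ·⟩) (⟨h.symm, ·⟩), ?_⟩
    rintro (⟨h, -⟩ | ⟨h, -⟩)
    exacts [h, h.symm]
  asymm u v := by
    have key : ∀ a b : ZMod 3, b = a + 1 → a ≠ b + 1 := by decide
    exact fun ⟨_, h⟩ ⟨_, h'⟩ => key _ _ h h'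

theorem not_isAltCycle_ofColoring (C : G.Coloring (ZMod 3)) {n : ℕ} [NeZero n]
    {f : ZMod n → V} (hf : ∀ i, G.Adj (f i) (f (i + 1))) :
    ¬ IsAltCycle (ofColoring C).dir f := by
  rintro ⟨i₀, hi₀, huniq⟩
  have hsum : ∑ i, (C (f (i + 1)) - C (f (i - 1))) = 0 := by
    rw [Finset.sum_sub_distrib,
      Fintype.sum_equiv (Equiv.addRight 1) (fun i => C (f (i + 1))) (fun i => C (f i))
        fun _ => rfl,
      Fintype.sum_equiv (Equiv.subRight 1) (fun i => C (f (i - 1))) (fun i => C (f i))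
        fun _ => rfl, sub_self]
  have hzero (i : ZMod n) (hi : i ≠ i₀) : C (f (i + 1)) - C (f (i - 1)) = 0 := by
    rcases not_not.1 (mt (huniq i) hi) with ⟨⟨-, h₁⟩, ⟨-, h₂⟩⟩ | ⟨⟨-, h₁⟩, ⟨-, h₂⟩⟩
    · linear_combination h₂ - h₁
    · linear_combination h₁ - h₂
  have hprev := ((ofColoring C).adj_iff _ _).1 (sub_add_cancel i₀ 1 ▸ hf (i₀ - 1))
  have hnext := ((ofColoring C).adj_iff _ _).1 (hf i₀)
  have hturn : C (f (i₀ + 1)) - C (f (i₀ - 1)) ≠ 0 := by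
    rcases hprev with h₁ | h₁ <;> rcases hnext with h₂ | h₂
    · rw [show C (f (i₀ + 1)) - C (f (i₀ - 1)) = 2 by linear_combination h₂.2 + h₁.2]
      decide
    · exact (hi₀ (Or.inr ⟨h₁, h₂⟩)).elim
    · exact (hi₀ (Or.inl ⟨h₁, h₂⟩)).elim
    · rw [show C (f (i₀ + 1)) - C (f (i₀ - 1)) = -2 by linear_combination -h₁.2 - h₂.2]
      decide
  exact hturn ((Finset.sum_eq_single i₀ (fun i _ hi => hzero i hi) (by simp)).symm.trans hsum)

theorem not_hasAltOddCycle_ofColoring (C : G.Coloring (ZMod 3)) :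
    ¬ HasAltOddCycle (ofColoring C) := by
  rintro ⟨n, f, hn, hf, halt⟩
  have : NeZero n := ⟨hn.pos.ne'⟩
  exact not_isAltCycle_ofColoring C hf.2 halt

end GraphOrientation

theorem ZMod.val_add_one_eq_ite {n : ℕ} [NeZero n] (i : ZMod n) :
    (i + 1).val = if i.val + 1 = n then 0 else i.val + 1 := by
  rw [ZMod.val_add, ZMod.val_one_eq_one_mod, Nat.add_mod_mod]
  split_ifs with h
  · rw [h, Nat.mod_self]
  · exact Nat.mod_eq_of_lt (lt_of_le_of_ne (ZMod.val_lt i) h)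

def ratCompleteColoring {p q k : ℕ} (h : p ≤ k * q) : (ratComplete p q).Coloring (Fin k) :=
  SimpleGraph.Coloring.mk (fun v => ⟨v / q, Nat.div_lt_of_lt_mul (by grind [v.isLt])⟩)
    fun {v w} hvw hc => by
      have hq : 0 < q := by grind [v.isLt]
      have hdiv : v.val / q = w.val / q := Fin.mk.inj_iff.1 hc
      have hv := Nat.div_add_mod v q
      have hw := Nat.div_add_mod w q
      have := Nat.mod_lt v hq
      have := Nat.mod_lt w hq
      have := le_abs.1 hvw.1
      rw [hdiv] at hv
      omega

namespace ratComplete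

open Fin.CommRing

section

variable {p q : ℕ} [NeZero p]

theorem adj_add_natCast (hq : 0 < q) (a : Fin p) {ℓ : ℕ} (h₁ : q ≤ ℓ) (h₂ : ℓ ≤ p - q) :
    (ratComplete p q).Adj a (a + ℓ) := by
  have hval := Fin.val_add_eq_ite a ℓ
  rw [Fin.val_natCast, Nat.mod_eq_of_lt (by omega)] at hval
  refine ⟨le_abs.2 ?_, abs_le.2 ⟨?_, ?_⟩, fun h => ?_⟩
  · split_ifs at hval <;> omega
  · split_ifs at hval <;> omega
  · split_ifs at hval <;> omega
  · have := congrArg Fin.val h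
    split_ifs at hval <;> omega

variable (D : GraphOrientation (ratComplete p q))

theorem dir_add_iff (hno : ¬ HasAltOddCycle D) (hq : 0 < q) (a : Fin p) {ℓ₁ ℓ₂ : ℕ}
    (h₁ : q ≤ ℓ₁) (h₂ : q ≤ ℓ₂) (h : ℓ₁ + ℓ₂ ≤ p - q) :
    D.dir a (a + ℓ₁) ↔ D.dir (a + ℓ₁) (a + ℓ₁ + ℓ₂) := by
  have hca := (adj_add_natCast hq a (ℓ := ℓ₁ + ℓ₂) (by omega) h).symm
  rw [Nat.cast_add, ← add_assoc] at hca
  exact D.dir_iff_dir_of_triangle hno (adj_add_natCast hq a h₁ (by omega))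
    (adj_add_natCast hq _ h₂ (by omega)) hca

theorem dir_add_iff_dir_zero (hno : ¬ HasAltOddCycle D) (hq : 0 < q) (hp : 3 * q < p)
    (a : Fin p) : (D.dir a (a + q) ↔ D.dir 0 q) ∧ (D.dir a (a + q + 1) ↔ D.dir 0 q) := by
  have hqq (a : Fin p) := dir_add_iff D hno hq a le_rfl le_rfl (by omega)
  have hqq1 (a : Fin p) := dir_add_iff D hno hq a le_rfl (ℓ₂ := q + 1) (by omega) (by omega)
  have hq1q (a : Fin p) := dir_add_iff D hno hq a (ℓ₁ := q + 1) (by omega) le_rfl (by omega)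
  push_cast at hqq1 hq1q
  have hstep (b : Fin p) : D.dir b (b + q) ↔ D.dir (b + 1) (b + 1 + q) := by
    have h₁ := (hqq (b - (q + q))).trans (hqq _)
    have h₂ := (hqq1 (b - (q + q))).trans (hq1q _)
    rw [show b - (q + q) + q + q = b by ring] at h₁
    rw [show b - (q + q) + q + (q + 1) = b + 1 by ring] at h₂
    exact h₁.symm.trans h₂
  have hall (k : ℕ) : D.dir (k : Fin p) (k + q) ↔ D.dir 0 q := by
    induction k with
    | zero => simp
    | succ k ih => rw [Nat.cast_succ, ← hstep, ih]
  have ha := hall a.val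
  have hb := hall (a + (q + 1)).val
  rw [Fin.cast_val_eq_self] at ha hb
  exact ⟨ha, add_assoc a q 1 ▸ (hq1q a).trans hb⟩

theorem hasAltOddCycle_of_dir_add (hp : 3 * q < p)
    (hfwd : ∀ a : Fin p, D.dir a (a + q) ∧ D.dir a (a + q + 1)) : HasAltOddCycle D := by
  let f : ZMod (2 * q + 1) → Fin p := fun i =>
    ⟨if i.val % 2 = 0 then q - i.val / 2 else 2 * q - i.val / 2, by split_ifs <;> omega⟩
  have hval (i) : (f i).val = if i.val % 2 = 0 then q - i.val / 2 else 2 * q - i.val / 2 := rfl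
  have hlt (i : ZMod (2 * q + 1)) : i.val < 2 * q + 1 := ZMod.val_lt i
  have hsucc := ZMod.val_add_one_eq_ite (n := 2 * q + 1)
  have hadd (a : Fin p) (ℓ : ℕ) (h : a.val + ℓ < p) : (a + ℓ).val = a.val + ℓ := by
    rw [Fin.val_add, Fin.val_natCast, Nat.add_mod_mod, Nat.mod_eq_of_lt h]
  have arc_even (i) (hi : i.val % 2 = 0) : D.dir (f i) (f (i + 1)) := by
    convert (hfwd (f i)).1 using 2
    ext
    have := hlt i
    rw [hadd _ _ (by rw [hval, if_pos hi]; omega), hval, hval, hsucc, if_pos hi]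
    split_ifs <;> omega
  have arc_odd (i) (hi : i.val % 2 = 1) : D.dir (f (i + 1)) (f i) := by
    convert (hfwd (f (i + 1))).2 using 2
    ext
    have := hlt i
    rw [add_assoc, ← Nat.cast_add_one, hadd _ _ (by rw [hval, hsucc]; split_ifs <;> omega),
      hval, hval, hsucc, if_neg (by omega)]
    split_ifs <;> omega
  refine ⟨2 * q + 1, f, odd_two_mul_add_one q, ⟨fun i j hij => ?_, fun i => ?_⟩, 0, ?_, ?_⟩
  · have hij' := congrArg Fin.val hij
    rw [hval, hval] at hij'
    have := hlt i
    have := hlt j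
    apply ZMod.val_injective
    split_ifs at hij' <;> omega
  · rcases Nat.mod_two_eq_zero_or_one i.val with h | h
    exacts [D.adj_of_dir (arc_even i h), (D.adj_of_dir (arc_odd i h)).symm]
  · have hlast := hsucc (0 - 1)
    rw [sub_add_cancel, ZMod.val_zero] at hlast
    have hin := arc_even (0 - 1) (by split_ifs at hlast; omega)
    rw [sub_add_cancel] at hin
    rintro (⟨h, -⟩ | ⟨-, h⟩)
    · exact D.asymm _ _ hin h
    · exact D.asymm _ _ (arc_even 0 (by simp)) h
  · intro j hj
    by_contra hj0
    obtain ⟨i, rfl⟩ : ∃ i, j = i + 1 := ⟨j - 1, (sub_add_cancel j 1).symm⟩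
    rw [add_sub_cancel_right] at hj
    have hi := hsucc i
    have := hlt i
    rw [if_neg fun h => hj0 ((ZMod.val_eq_zero _).1 (by rw [hsucc, if_pos h]))] at hi
    apply hj
    rcases Nat.mod_two_eq_zero_or_one i.val with h | h
    · exact .inr ⟨arc_even i h, arc_odd (i + 1) (by omega)⟩
    · exact .inl ⟨arc_odd i h, arc_even (i + 1) (by omega)⟩

theorem hasAltOddCycle_of_dir_zero (hq : 0 < q) (hp : 3 * q < p) (h₀ : D.dir 0 q) :
    HasAltOddCycle D := by
  by_contra hno
  exact hno (hasAltOddCycle_of_dir_add D hp fun a =>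
    (dir_add_iff_dir_zero D hno hq hp a).imp (·.2 h₀) (·.2 h₀))

end

theorem hasAltOddCycle {p q : ℕ} (hq : 0 < q) (hp : 3 * q < p) (D : GraphOrientation (ratComplete p q)) :
    HasAltOddCycle D := by
  have : NeZero p := ⟨by omega⟩
  have h0q := adj_add_natCast hq (0 : Fin p) le_rfl (by omega)
  rw [zero_add] at h0q
  by_cases h₀ : D.dir 0 q
  · exact hasAltOddCycle_of_dir_zero D hq hp h₀
  · exact D.hasAltOddCycle_of_reverse
      (hasAltOddCycle_of_dir_zero _ hq hp ((D.dir_swap_iff h0q).2 h₀))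

end ratComplete

theorem statement14_general (p q : ℕ) (hq : 1 ≤ q) :
    (∃ D : GraphOrientation (ratComplete p q), ¬ HasAltOddCycle D) ↔ p ≤ 3 * q := by
  constructor
  · rintro ⟨D, hD⟩
    by_contra! hp
    exact hD (ratComplete.hasAltOddCycle hq hp D)
  · intro hp
    exact ⟨_, GraphOrientation.not_hasAltOddCycle_ofColoring (ratCompleteColoring hp)⟩

theorem statement14 (p q : ℕ) (hq : 1 ≤ q) (hp : 2 * q ≤ p) :
    (∃ D : GraphOrientation (ratComplete p q), ¬ HasAltOddCycle D) ↔ p ≤ 3 * q :=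
  statement14_general p q hq
end
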